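/- arXiv:1905.00844 — 6 statements merged into one kernel-verified Lean document; each statement's English description precedes it below -/
import Mathlib

section
/- Let n ≥ 1 be an integer, α ∈ (0,1], and τx, τy > 0. Set C = 1/(α(2n−1) + (n−1)²) and κ* = α n² τx / (α n² τx + ((n−1)² + α(2n−1)) τy). Then κ* is the unique real number κ such that for all x, y ∈ ℝ, writing m = (τx·x + τy·y)/(τx + τy), the identity C·(α n² m + (1−α)(n−1)²·(κ·m + (1−κ)·y)) = κ·x + (1−κ)·y holds. -/
/-- Finite-game symmetric linear Nash equilibrium weight: `κ*` is the unique fixed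
point of the best-response map for linear strategies. -/
theorem stmt2 (n : ℕ) (hn : 1 ≤ n) (α : ℝ) (hα0 : 0 < α) (hα1 : α ≤ 1)
    (τx τy : ℝ) (hτx : 0 < τx) (hτy : 0 < τy)
    (C : ℝ) (hC : C = 1 / (α * (2 * (n : ℝ) - 1) + ((n : ℝ) - 1) ^ 2))
    (κstar : ℝ)
    (hκstar : κstar = α * (n : ℝ) ^ 2 * τx /
      (α * (n : ℝ) ^ 2 * τx + (((n : ℝ) - 1) ^ 2 + α * (2 * (n : ℝ) - 1)) * τy)) :
    ∀ κ : ℝ,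
      (∀ x y : ℝ,
        C * (α * (n : ℝ) ^ 2 * ((τx * x + τy * y) / (τx + τy)) +
          (1 - α) * ((n : ℝ) - 1) ^ 2 *
            (κ * ((τx * x + τy * y) / (τx + τy)) + (1 - κ) * y)) = κ * x + (1 - κ) * y)
      ↔ κ = κstar := by
  have hn1 : (1:ℝ) ≤ (n:ℝ) := by exact_mod_cast hn
  have hD : 0 < α * (2 * (n : ℝ) - 1) + ((n : ℝ) - 1) ^ 2 := by nlinarith
  have hden : 0 < α * (n : ℝ) ^ 2 * τx + (((n : ℝ) - 1) ^ 2 + α * (2 * (n : ℝ) - 1)) * τy := by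
    nlinarith [mul_pos hD hτy, sq_nonneg ((n:ℝ)), mul_pos hα0 hτx]
  have hτ : (0:ℝ) < τx + τy := by linarith
  subst hC hκstar
  intro κ
  constructor
  · intro h
    have h1 := h 1 0
    field_simp at h1
    rw [eq_div_iff hden.ne']
    nlinarith [h1]
  · rintro rfl
    intro x y
    have h2 : α * (n : ℝ) ^ 2 * τx + τy * (((n : ℝ) - 1) ^ 2 + α * (2 * (n : ℝ) - 1)) ≠ 0 := by
      rw [mul_comm τy]; exact hden.ne'
    have h3 := hD.ne'
    have h4 := hτ.ne'
    field_simp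
    ring
end

section
/- Let α ∈ (0,1] and τx, τy > 0. Then κ* = α τx / (α τx + τy) is the unique real number κ such that for all x, y ∈ ℝ, writing m = (τx·x + τy·y)/(τx + τy), the identity α·m + (1−α)·(κ·m + (1−κ)·y) = κ·x + (1−κ)·y holds. -/
/-!
Measured from the public signal `y`, the posterior mean is `m - y = w (x - y)` with
`w = τx / (τx + τy)`, and the best response to the strategy with weight `κ` deviates from `y`
by `(α + (1 - α) κ) (m - y)`. So the best response is the strategy itself exactly when
`(α + (1 - α) κ) w = κ`, a linear equation in `κ` whose root is `α τx / (α τx + τy)`.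
-/

namespace BeautyContest

theorem bestResponse_sub_linearStrategy (α κ m x y : ℝ) :
    α * m + (1 - α) * (κ * m + (1 - κ) * y) - (κ * x + (1 - κ) * y)
      = (α + (1 - α) * κ) * (m - y) - κ * (x - y) := by
  ring

theorem posteriorMean_sub_public {τx τy : ℝ} (h : τx + τy ≠ 0) (x y : ℝ) :
    (τx * x + τy * y) / (τx + τy) - y = τx / (τx + τy) * (x - y) := by
  field_simp
  ring

theorem forall_bestResponse_eq_iff {w : ℝ} {m : ℝ → ℝ → ℝ}
    (hm : ∀ x y, m x y - y = w * (x - y)) (α κ : ℝ) :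
    (∀ x y, α * m x y + (1 - α) * (κ * m x y + (1 - κ) * y) = κ * x + (1 - κ) * y)
      ↔ (α + (1 - α) * κ) * w = κ := by
  have hdev : ∀ x y, α * m x y + (1 - α) * (κ * m x y + (1 - κ) * y) - (κ * x + (1 - κ) * y)
      = ((α + (1 - α) * κ) * w - κ) * (x - y) := fun x y => by
    rw [bestResponse_sub_linearStrategy, hm]
    ring
  constructor
  · intro h
    have h10 := hdev 1 0
    rw [h 1 0, sub_self] at h10
    linarith
  · intro h x y
    rw [← sub_eq_zero, hdev, h, sub_self, zero_mul]

theorem signalWeight_fixedPoint_iff {α τx τy : ℝ} (hα : 0 < α) (hτx : 0 < τx) (hτy : 0 < τy)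
    (κ : ℝ) :
    (α + (1 - α) * κ) * (τx / (τx + τy)) = κ ↔ κ = α * τx / (α * τx + τy) := by
  have hden : α * τx + τy ≠ 0 := by positivity
  rw [eq_div_iff hden]
  field_simp
  constructor <;> intro h <;> linarith

end BeautyContest

theorem stmt3_general (α : ℝ) (hα0 : 0 < α)
    (τx τy : ℝ) (hτx : 0 < τx) (hτy : 0 < τy)
    (κstar : ℝ) (hκstar : κstar = α * τx / (α * τx + τy)) :
    ∀ κ : ℝ,
      (∀ x y : ℝ,
        α * ((τx * x + τy * y) / (τx + τy)) +
          (1 - α) * (κ * ((τx * x + τy * y) / (τx + τy)) + (1 - κ) * y)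
        = κ * x + (1 - κ) * y)
      ↔ κ = κstar := by
  intro κ
  subst hκstar
  exact (BeautyContest.forall_bestResponse_eq_iff (m := fun x y => (τx * x + τy * y) / (τx + τy))
    (BeautyContest.posteriorMean_sub_public (by positivity)) α κ).trans
    (BeautyContest.signalWeight_fixedPoint_iff hα0 hτx hτy κ)

/-- Continuum-game symmetric linear Nash equilibrium weight (Morris–Shin): `κ*` is
the unique fixed point of the best-response map for linear strategies. -/
theorem stmt3 (α : ℝ) (hα0 : 0 < α) (hα1 : α ≤ 1)
    (τx τy : ℝ) (hτx : 0 < τx) (hτy : 0 < τy)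
    (κstar : ℝ) (hκstar : κstar = α * τx / (α * τx + τy)) :
    ∀ κ : ℝ,
      (∀ x y : ℝ,
        α * ((τx * x + τy * y) / (τx + τy)) +
          (1 - α) * (κ * ((τx * x + τy * y) / (τx + τy)) + (1 - κ) * y)
        = κ * x + (1 - κ) * y)
      ↔ κ = κstar :=
  stmt3_general α hα0 τx τy hτx hτy κstar hκstar
end

section
/- In the Keynesian beauty contest signal model, for every agent i ∈ {1,…,n}: E[ −α(θᵢ − s)² − (1−α)(θᵢ − (1/n)·Σⱼ θⱼ)² ] = −α(κ²σx² + (1−κ)²σy²) − (1−α)·κ²·((n−1)/n)·σx². -/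
open MeasureTheory ProbabilityTheory

/-- Product of two L² functions is integrable. -/
lemma memL2_integrable_mul {Ω : Type*} [MeasurableSpace Ω] {P : Measure Ω}
    {f g : Ω → ℝ} (hf : MemLp f 2 P) (hg : MemLp g 2 P) :
    Integrable (fun ω => f ω * g ω) P := by
  have h : (fun ω => f ω * g ω)
      = fun ω => ((f ω + g ω) ^ 2 - f ω ^ 2 - g ω ^ 2) / 2 := by
    funext ω; ring
  rw [h]
  exact (((hf.add hg).integrable_sq.sub hf.integrable_sq).sub hg.integrable_sq).div_const 2


/-- Expected equilibrium utility of each agent in the finite Keynesian beauty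
contest signal model, conditional on the state `s`. -/
theorem stmt4 {Ω : Type*} [MeasurableSpace Ω] (P : Measure Ω) [IsProbabilityMeasure P]
    (n : ℕ) (hn : 1 ≤ n) (s κ α : ℝ) (hα0 : 0 ≤ α) (hα1 : α ≤ 1)
    (σx2 σy2 : ℝ) (hx : 0 < σx2) (hy : 0 < σy2)
    (ε : Fin n → Ω → ℝ) (εy : Ω → ℝ)
    (hmem : ∀ j, MemLp (ε j) 2 P) (hmemy : MemLp εy 2 P)
    (hεmean : ∀ j, ∫ ω, ε j ω ∂P = 0) (hεvar : ∀ j, ∫ ω, (ε j ω) ^ 2 ∂P = σx2)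
    (hymean : ∫ ω, εy ω ∂P = 0) (hyvar : ∫ ω, (εy ω) ^ 2 ∂P = σy2)
    (hindep : iIndepFun
      (fun o : Option (Fin n) => o.elim εy ε) P)
    (θ : Fin n → Ω → ℝ)
    (hθ : ∀ j ω, θ j ω = s + κ * ε j ω + (1 - κ) * εy ω)
    (i : Fin n) :
    ∫ ω, (-α * (θ i ω - s) ^ 2 -
        (1 - α) * (θ i ω - (1 / (n : ℝ)) * ∑ j, θ j ω) ^ 2) ∂P
      = -α * (κ ^ 2 * σx2 + (1 - κ) ^ 2 * σy2)
        - (1 - α) * κ ^ 2 * (((n : ℝ) - 1) / (n : ℝ)) * σx2 := by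
  have hn0 : (n : ℝ) ≠ 0 := by positivity
  -- cross moments
  have hcross : ∀ j k : Fin n, j ≠ k → ∫ ω, ε j ω * ε k ω ∂P = 0 := by
    intro j k hjk
    have h := IndepFun.integral_mul_eq_mul_integral (hindep.indepFun (show (some j : Option (Fin n)) ≠ some k by
      simpa using hjk)) (hmem j).aestronglyMeasurable
      (hmem k).aestronglyMeasurable
    simpa [Pi.mul_apply, hεmean j] using h
  have hm : ∀ j k : Fin n, ∫ ω, ε j ω * ε k ω ∂P = if j = k then σx2 else 0 := by
    intro j k
    by_cases h : j = k
    · subst h; simp only [if_pos rfl]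
      simpa [sq] using hεvar j
    · simp [h, hcross j k h]
  have hcy : ∀ j : Fin n, ∫ ω, ε j ω * εy ω ∂P = 0 := by
    intro j
    have h := IndepFun.integral_mul_eq_mul_integral (hindep.indepFun (show (some j : Option (Fin n)) ≠ none by
      simp)) (hmem j).aestronglyMeasurable hmemy.aestronglyMeasurable
    simpa [Pi.mul_apply, hεmean j] using h
  -- L² facts
  have hS : MemLp (fun ω => ∑ j, ε j ω) 2 P :=
    memLp_finset_sum Finset.univ (fun j _ => hmem j)
  have hA : MemLp (fun ω => κ * ε i ω + (1 - κ) * εy ω) 2 P :=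
    ((hmem i).const_mul κ).add (hmemy.const_mul (1 - κ))
  have hB : MemLp (fun ω => ε i ω - (1 / (n : ℝ)) * ∑ j, ε j ω) 2 P :=
    (hmem i).sub (hS.const_mul _)
  -- pointwise rewrite of the integrand
  have hpt : ∀ ω, (-α * (θ i ω - s) ^ 2 -
        (1 - α) * (θ i ω - (1 / (n : ℝ)) * ∑ j, θ j ω) ^ 2)
      = -α * (κ * ε i ω + (1 - κ) * εy ω) ^ 2
        - ((1 - α) * κ ^ 2) * (ε i ω - (1 / (n : ℝ)) * ∑ j, ε j ω) ^ 2 := by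
    intro ω
    have hsum : ∑ j, θ j ω
        = (n : ℝ) * s + κ * ∑ j, ε j ω + (1 - κ) * ((n : ℝ) * εy ω) := by
      have : ∑ j, θ j ω = ∑ j, (s + κ * ε j ω + (1 - κ) * εy ω) := by
        simp [hθ]
      rw [this]
      simp [Finset.sum_add_distrib, Finset.mul_sum]
      ring
    rw [hθ i ω, hsum]
    field_simp
    ring
  rw [integral_congr_ae (Filter.Eventually.of_forall hpt)]
  -- split the integral
  have hiA : Integrable (fun ω => (κ * ε i ω + (1 - κ) * εy ω) ^ 2) P :=
    hA.integrable_sq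
  have hiB : Integrable (fun ω => (ε i ω - (1 / (n : ℝ)) * ∑ j, ε j ω) ^ 2) P :=
    hB.integrable_sq
  rw [integral_sub (hiA.const_mul (-α)) (hiB.const_mul ((1 - α) * κ ^ 2)),
    integral_const_mul, integral_const_mul]
  -- compute ∫ A²
  have hA2 : ∫ ω, (κ * ε i ω + (1 - κ) * εy ω) ^ 2 ∂P
      = κ ^ 2 * σx2 + (1 - κ) ^ 2 * σy2 := by
    have hpt2 : ∀ ω, (κ * ε i ω + (1 - κ) * εy ω) ^ 2
        = κ ^ 2 * (ε i ω) ^ 2 + (2 * κ * (1 - κ)) * (ε i ω * εy ω)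
          + (1 - κ) ^ 2 * (εy ω) ^ 2 := by intro ω; ring
    have g1 : Integrable (fun ω => κ ^ 2 * (ε i ω) ^ 2) P :=
      (hmem i).integrable_sq.const_mul _
    have g2 : Integrable (fun ω => (2 * κ * (1 - κ)) * (ε i ω * εy ω)) P :=
      (memL2_integrable_mul (hmem i) hmemy).const_mul _
    have g3 : Integrable (fun ω => (1 - κ) ^ 2 * (εy ω) ^ 2) P :=
      hmemy.integrable_sq.const_mul _
    have g12 : Integrable (fun ω => κ ^ 2 * (ε i ω) ^ 2
        + (2 * κ * (1 - κ)) * (ε i ω * εy ω)) P := g1.add g2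
    rw [integral_congr_ae (Filter.Eventually.of_forall hpt2)]
    rw [integral_add g12 g3, integral_add g1 g2,
      integral_const_mul, integral_const_mul, integral_const_mul,
      hεvar i, hcy i, hyvar]
    ring
  -- compute ∫ B²
  have hB2 : ∫ ω, (ε i ω - (1 / (n : ℝ)) * ∑ j, ε j ω) ^ 2 ∂P
      = ((n : ℝ) - 1) / (n : ℝ) * σx2 := by
    have hpt3 : ∀ ω, (ε i ω - (1 / (n : ℝ)) * ∑ j, ε j ω) ^ 2
        = (ε i ω) ^ 2 - (2 / (n : ℝ)) * ∑ j, ε i ω * ε j ω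
          + (1 / (n : ℝ) ^ 2) * ∑ j, ∑ k, ε j ω * ε k ω := by
      intro ω
      have h1 : ∑ j, ε i ω * ε j ω = ε i ω * ∑ j, ε j ω :=
        (Finset.mul_sum _ _ _).symm
      have h2 : ∑ j, ∑ k, ε j ω * ε k ω = (∑ j, ε j ω) * (∑ k, ε k ω) := by
        rw [Finset.sum_mul_sum]
      rw [h1, h2]; ring
    have hint1 : Integrable (fun ω => ∑ j, ε i ω * ε j ω) P :=
      integrable_finset_sum _ (fun j _ => memL2_integrable_mul (hmem i) (hmem j))
    have hint2 : Integrable (fun ω => ∑ j, ∑ k, ε j ω * ε k ω) P :=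
      integrable_finset_sum _ (fun j _ =>
        integrable_finset_sum _ (fun k _ => memL2_integrable_mul (hmem j) (hmem k)))
    have g1 : Integrable (fun ω => (2 / (n : ℝ)) * ∑ j, ε i ω * ε j ω) P :=
      hint1.const_mul _
    have g2 : Integrable (fun ω => (1 / (n : ℝ) ^ 2) * ∑ j, ∑ k, ε j ω * ε k ω) P :=
      hint2.const_mul _
    have g3 : Integrable (fun ω => (ε i ω) ^ 2
        - (2 / (n : ℝ)) * ∑ j, ε i ω * ε j ω) P := (hmem i).integrable_sq.sub g1
    rw [integral_congr_ae (Filter.Eventually.of_forall hpt3)]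
    rw [integral_add g3 g2,
      integral_sub (hmem i).integrable_sq g1,
      integral_const_mul, integral_const_mul,
      integral_finset_sum _ (fun j _ => memL2_integrable_mul (hmem i) (hmem j)),
      integral_finset_sum _ (fun j _ =>
        integrable_finset_sum _ (fun k _ => memL2_integrable_mul (hmem j) (hmem k)))]
    have hs1 : ∑ j, ∫ ω, ε i ω * ε j ω ∂P = σx2 := by
      simp [hm]
    have hs2 : ∑ j, ∫ ω, (∑ k, ε j ω * ε k ω) ∂P = (n : ℝ) * σx2 := by
      have : ∀ j : Fin n, ∫ ω, (∑ k, ε j ω * ε k ω) ∂P = σx2 := by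
        intro j
        rw [integral_finset_sum _ (fun k _ => memL2_integrable_mul (hmem j) (hmem k))]
        simp [hm]
      simp [this, Finset.card_univ]
    rw [hεvar i, hs1, hs2]
    field_simp
    ring
  rw [hA2, hB2]
  field_simp
end

section
/- Fix α ∈ (0,1], an integer n ≥ 1, and b = σy² > 0. The function W : (0,∞) → ℝ defined by W(a) = −α(κ(a)²·a + (1−κ(a))²·b) − (1−α)·((n−1)/n)·κ(a)²·a, where κ(a) = α·b/(α·b + a), is strictly decreasing on (0,∞). -/
/-!
Write `c = α b` and `s = α + (1 - α)(n - 1)/n ∈ [α, 1]`. Eliminating `a` through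
`κ (c + a) = c` turns the expected utility into the quadratic
`W = -c (1 - κ)(1 + (s - 1) κ)` in the weight alone. This quadratic is increasing on `[0, 1]`
(its slope is `c (2 - s)` at `κ = 0` and `c s` at `κ = 1`), while `κ = c / (c + a)` decreases
from `1` to `0` as `a` runs over `(0, ∞)`.
-/

open Set

lemma natCast_sub_one_div_self_mem_Icc (n : ℕ) : ((n : ℝ) - 1) / n ∈ Icc (0 : ℝ) 1 := by
  rcases Nat.eq_zero_or_pos n with rfl | hn
  · simp
  · have hn' : (1 : ℝ) ≤ n := by exact_mod_cast hn
    exact ⟨div_nonneg (by linarith) (by linarith), (div_le_one₀ (by linarith)).2 (by linarith)⟩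

def utilityOfWeight (c s k : ℝ) : ℝ := -(c * ((1 - k) * (1 + (s - 1) * k)))

lemma utility_eq_utilityOfWeight (α b m a : ℝ) :
    -α * ((α * b / (α * b + a)) ^ 2 * a + (1 - α * b / (α * b + a)) ^ 2 * b) -
        (1 - α) * m * (α * b / (α * b + a)) ^ 2 * a =
      utilityOfWeight (α * b) (α + (1 - α) * m) (α * b / (α * b + a)) := by
  unfold utilityOfWeight
  by_cases h : α * b + a = 0
  · simp only [h, div_zero]
    ring
  · field_simp
    ring

lemma strictMonoOn_utilityOfWeight {c s : ℝ} (hc : 0 < c) (hs0 : 0 ≤ s) (hs2 : s ≤ 2) :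
    StrictMonoOn (utilityOfWeight c s) (Icc 0 1) := by
  intro k hk l hl hkl
  have hslope : 0 < (2 - s) + (s - 1) * (k + l) := by
    nlinarith [hk.1, hl.2]
  have hdiff : utilityOfWeight c s l - utilityOfWeight c s k =
      c * (l - k) * ((2 - s) + (s - 1) * (k + l)) := by
    unfold utilityOfWeight
    ring
  have := mul_pos (mul_pos hc (sub_pos.2 hkl)) hslope
  linarith

lemma strictAntiOn_div_add {c : ℝ} (hc : 0 < c) :
    StrictAntiOn (fun a : ℝ => c / (c + a)) (Ioi (-c)) := by
  intro x hx y _ hxy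
  have hx' : 0 < c + x := by rw [mem_Ioi] at hx; linarith
  exact div_lt_div_of_pos_left hc hx' (by linarith)

lemma mapsTo_div_add_Ioi_zero {c : ℝ} (hc : 0 < c) :
    MapsTo (fun a : ℝ => c / (c + a)) (Ioi 0) (Icc 0 1) := by
  intro a ha
  rw [mem_Ioi] at ha
  exact ⟨by positivity, (div_le_one₀ (by linarith)).2 (by linarith)⟩

theorem stmt8_general (α : ℝ) (hα0 : 0 < α) (hα1 : α ≤ 1) (n : ℕ)
    (b : ℝ) (hb : 0 < b)
    (κ : ℝ → ℝ) (hκ : ∀ a : ℝ, κ a = α * b / (α * b + a))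
    (W : ℝ → ℝ)
    (hW : ∀ a : ℝ, W a =
      -α * ((κ a) ^ 2 * a + (1 - κ a) ^ 2 * b) -
        (1 - α) * (((n : ℝ) - 1) / (n : ℝ)) * (κ a) ^ 2 * a) :
    StrictAntiOn W (Set.Ioi 0) := by
  set m : ℝ := ((n : ℝ) - 1) / n
  have hc : 0 < α * b := mul_pos hα0 hb
  obtain ⟨hm0, hm1⟩ := natCast_sub_one_div_self_mem_Icc n
  have hs0 : 0 ≤ α + (1 - α) * m := by nlinarith
  have hs1 : α + (1 - α) * m ≤ 1 := by nlinarith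
  have hWκ : W = utilityOfWeight (α * b) (α + (1 - α) * m) ∘ fun a => α * b / (α * b + a) := by
    funext a
    rw [hW, hκ, Function.comp_apply, utility_eq_utilityOfWeight]
  rw [hWκ]
  exact (strictMonoOn_utilityOfWeight hc hs0 (by linarith)).comp_strictAntiOn
    ((strictAntiOn_div_add hc).mono (Ioi_subset_Ioi (by linarith))) (mapsTo_div_add_Ioi_zero hc)

/-- All else fixed, increasing the private-signal variance `a = σx²` (with the
equilibrium weight `κ` adjusting) strictly decreases expected utility. -/
theorem stmt8 (α : ℝ) (hα0 : 0 < α) (hα1 : α ≤ 1) (n : ℕ) (hn : 1 ≤ n)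
    (b : ℝ) (hb : 0 < b)
    (κ : ℝ → ℝ) (hκ : ∀ a : ℝ, κ a = α * b / (α * b + a))
    (W : ℝ → ℝ)
    (hW : ∀ a : ℝ, W a =
      -α * ((κ a) ^ 2 * a + (1 - κ a) ^ 2 * b) -
        (1 - α) * (((n : ℝ) - 1) / (n : ℝ)) * (κ a) ^ 2 * a) :
    StrictAntiOn W (Set.Ioi 0) :=
  stmt8_general α hα0 hα1 n b hb κ hκ W hW
end

section
/- In the noisy Keynesian beauty contest signal model with ν > 0 and κ²σx² + α(1−κ)²σy² > 0, for each n let Aₙ = E[ −α(θ̃ᵢ − s)² − (1−α)(θ̃ᵢ − (1/n)·Σⱼ θ̃ⱼ)² ] and Bₙ = E[ −α(θᵢ − s)² − (1−α)(θᵢ − (1/n)·Σⱼ θⱼ)² ]. Then the ratio Aₙ/Bₙ converges, as n → ∞, to 1 + ν/(κ²σx² + α(1−κ)²σy²). -/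
open MeasureTheory ProbabilityTheory

def Sfin (n : ℕ) : Finset (Option ℕ ⊕ ℕ) := insert (Sum.inl none)
    (((Finset.range n).image (fun j => Sum.inl (some j))) ∪ ((Finset.range n).image Sum.inr))

lemma sumS {M : Type*} [AddCommMonoid M] (n : ℕ) (g : Option ℕ ⊕ ℕ → M) :
    ∑ t ∈ Sfin n, g t
    = g (Sum.inl none) + ((∑ j ∈ Finset.range n, g (Sum.inl (some j))) +
        ∑ j ∈ Finset.range n, g (Sum.inr j)) := by
  rw [Sfin, Finset.sum_insert (by simp), Finset.sum_union (by simp [Finset.disjoint_left]),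
    Finset.sum_image (by intro a _ b _ h; simpa using h),
    Finset.sum_image (by intro a _ b _ h; simpa using h)]

lemma sum_range_ite_f (n : ℕ) (hn : 1 ≤ n) (f : ℕ → ℝ) :
    ∑ j ∈ Finset.range n, (if j = 0 then f j else 0) = f 0 := by
  rw [Finset.sum_ite_eq' (Finset.range n) 0 f]
  simp [Nat.lt_of_lt_of_le Nat.zero_lt_one hn]

lemma qlem (n : ℕ) (hn : 1 ≤ n) :
    ∑ j ∈ Finset.range n, ((if j = 0 then (1:ℝ) else 0) - 1/(n:ℝ))^2 = 1 - 1/(n:ℝ) := by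
  have hm : (n:ℝ) ≠ 0 := Nat.cast_ne_zero.2 (by omega)
  have h1 : ∀ j, ((if j = 0 then (1:ℝ) else 0) - 1/(n:ℝ))^2
      = (1/(n:ℝ))^2 + (if j = 0 then (1 - 1/(n:ℝ))^2 - (1/(n:ℝ))^2 else 0) := by
    intro j; split_ifs <;> ring
  rw [Finset.sum_congr rfl (fun j _ => h1 j), Finset.sum_add_distrib, Finset.sum_const,
    Finset.card_range, sum_range_ite_f n hn, nsmul_eq_mul]
  field_simp
  ring

lemma sq_sum_integral {Ω ι : Type*} [MeasurableSpace Ω] {P : Measure Ω} [IsProbabilityMeasure P]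
    {F : ι → Ω → ℝ} (hF : iIndepFun F P)
    (hmemF : ∀ t, MemLp (F t) 2 P) (hmean : ∀ t, ∫ ω, F t ω ∂P = 0)
    (c : ι → ℝ) (sfin : Finset ι) :
    ∫ ω, (∑ t ∈ sfin, c t * F t ω) ^ 2 ∂P = ∑ t ∈ sfin, (c t) ^ 2 * ∫ ω, (F t ω) ^ 2 ∂P := by
  have hint : ∀ t u : ι, Integrable (fun ω => (c t * F t ω) * (c u * F u ω)) P := by
    intro t u
    by_cases h : t = u
    · subst h
      have h2 := ((hmemF t).integrable_sq).const_mul (c t * c t)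
      apply h2.congr
      filter_upwards with ω; ring
    · have h2 := ((hF.indepFun h).integrable_mul ((hmemF t).integrable one_le_two)
        ((hmemF u).integrable one_le_two)).const_mul (c t * c u)
      apply h2.congr
      filter_upwards with ω; simp [Pi.mul_apply]; ring
  calc ∫ ω, (∑ t ∈ sfin, c t * F t ω) ^ 2 ∂P
      = ∫ ω, ∑ t ∈ sfin, ∑ u ∈ sfin, (c t * F t ω) * (c u * F u ω) ∂P := by
        congr 1; funext ω; rw [sq, Finset.sum_mul_sum]
    _ = ∑ t ∈ sfin, ∑ u ∈ sfin, ∫ ω, (c t * F t ω) * (c u * F u ω) ∂P := by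
        rw [integral_finset_sum _ (fun t _ => integrable_finset_sum _ (fun u _ => hint t u))]
        exact Finset.sum_congr rfl fun t _ => integral_finset_sum _ (fun u _ => hint t u)
    _ = ∑ t ∈ sfin, (c t) ^ 2 * ∫ ω, (F t ω) ^ 2 ∂P := by
        refine Finset.sum_congr rfl fun t ht => ?_
        rw [Finset.sum_eq_single t]
        · rw [show (fun ω => (c t * F t ω) * (c t * F t ω)) = fun ω => (c t)^2 * (F t ω)^2 by
            funext ω; ring]
          exact MeasureTheory.integral_const_mul _ _
        · intro u hu hne
          have hi : IndepFun (F t) (F u) P := hF.indepFun (fun h => hne h.symm)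
          have h0 := hi.integral_mul_eq_mul_integral (hmemF t).aestronglyMeasurable (hmemF u).aestronglyMeasurable
          have : ∫ ω, (c t * F t ω) * (c u * F u ω) ∂P
              = (c t * c u) * ∫ ω, (F t * F u) ω ∂P := by
            rw [← MeasureTheory.integral_const_mul]; congr 1; funext ω; simp [Pi.mul_apply]; ring
          rw [this, h0, hmean t, hmean u]; ring
        · intro h; exact absurd ht h

/-- The agents' price of privacy in the continuum limit: the ratio of the expected
utility under the noisy equilibrium profile to that under the noiseless profile
converges, as `n → ∞`, to `1 + ν/(κ²σx² + α(1-κ)²σy²)`. -/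
theorem stmt12 {Ω : Type*} [MeasurableSpace Ω] (P : Measure Ω) [IsProbabilityMeasure P]
    (s κ α : ℝ) (hα0 : 0 ≤ α) (hα1 : α ≤ 1)
    (σx2 σy2 ν : ℝ) (hx : 0 < σx2) (hy : 0 < σy2) (hν : 0 < ν)
    (hD : 0 < κ ^ 2 * σx2 + α * (1 - κ) ^ 2 * σy2)
    (ε : ℕ → Ω → ℝ) (εy : Ω → ℝ) (η : ℕ → Ω → ℝ)
    (hmem : ∀ j, MemLp (ε j) 2 P) (hmemy : MemLp εy 2 P) (hmemη : ∀ j, MemLp (η j) 2 P)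
    (hεmean : ∀ j, ∫ ω, ε j ω ∂P = 0) (hεvar : ∀ j, ∫ ω, (ε j ω) ^ 2 ∂P = σx2)
    (hymean : ∫ ω, εy ω ∂P = 0) (hyvar : ∫ ω, (εy ω) ^ 2 ∂P = σy2)
    (hηmean : ∀ j, ∫ ω, η j ω ∂P = 0) (hηvar : ∀ j, ∫ ω, (η j ω) ^ 2 ∂P = ν)
    (hindep : iIndepFun
      (Sum.elim (fun o : Option ℕ => o.elim εy ε) η) P)
    (θ θnoisy : ℕ → Ω → ℝ)
    (hθ : ∀ j ω, θ j ω = s + κ * ε j ω + (1 - κ) * εy ω)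
    (hθnoisy : ∀ j ω, θnoisy j ω = θ j ω + η j ω)
    (A B : ℕ → ℝ)
    (hA : ∀ n : ℕ, 1 ≤ n → ∀ i : ℕ, i < n →
      A n = ∫ ω, (-α * (θnoisy i ω - s) ^ 2 -
        (1 - α) * (θnoisy i ω - (1 / (n : ℝ)) * ∑ j ∈ Finset.range n, θnoisy j ω) ^ 2) ∂P)
    (hB : ∀ n : ℕ, 1 ≤ n → ∀ i : ℕ, i < n →
      B n = ∫ ω, (-α * (θ i ω - s) ^ 2 -
        (1 - α) * (θ i ω - (1 / (n : ℝ)) * ∑ j ∈ Finset.range n, θ j ω) ^ 2) ∂P) :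
    Filter.Tendsto (fun n => A n / B n) Filter.atTop
      (nhds (1 + ν / (κ ^ 2 * σx2 + α * (1 - κ) ^ 2 * σy2))) := by
  classical
  set F : Option ℕ ⊕ ℕ → Ω → ℝ := Sum.elim (fun o : Option ℕ => o.elim εy ε) η with hFdef
  have hmemF : ∀ t, MemLp (F t) 2 P := by
    rintro (⟨_|j⟩|j)
    · exact hmemy
    · exact hmem j
    · exact hmemη j
  have hmeanF : ∀ t, ∫ ω, F t ω ∂P = 0 := by
    rintro (⟨_|j⟩|j)
    · exact hymean
    · exact hεmean j
    · exact hηmean j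
  set S : ℕ → Finset (Option ℕ ⊕ ℕ) := fun n => insert (Sum.inl none)
      (((Finset.range n).image (fun j => Sum.inl (some j))) ∪ ((Finset.range n).image Sum.inr))
    with hSdef
  set D := κ ^ 2 * σx2 + α * (1 - κ) ^ 2 * σy2 with hDdef
  have hD' : D ≠ 0 := ne_of_gt hD
  -- exact values
  have hAval : ∀ n : ℕ, 1 ≤ n →
      A n = -α * (κ^2*σx2 + (1-κ)^2*σy2 + ν) - (1-α) * ((κ^2*σx2 + ν) * (1 - 1/(n:ℝ))) := by
    intro n hn
    have hm : (n:ℝ) ≠ 0 := Nat.cast_ne_zero.2 (by omega)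
    set cX : Option ℕ ⊕ ℕ → ℝ := Sum.elim
        (fun o => o.elim (1-κ) (fun j => if j = 0 then κ else 0))
        (fun j => if j = 0 then (1:ℝ) else 0) with hcX
    set cY : Option ℕ ⊕ ℕ → ℝ := Sum.elim
        (fun o => o.elim 0 (fun j => κ * ((if j = 0 then (1:ℝ) else 0) - 1/(n:ℝ))))
        (fun j => (if j = 0 then (1:ℝ) else 0) - 1/(n:ℝ)) with hcY
    have idX : ∀ ω, θnoisy 0 ω - s = ∑ t ∈ Sfin n, cX t * F t ω := by
      intro ω
      rw [sumS]
      simp only [hcX, hFdef, Sum.elim_inl, Sum.elim_inr, Option.elim_none, Option.elim_some]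
      have e1 : ∀ j, (if j = 0 then κ else 0) * ε j ω = (if j = 0 then κ * ε j ω else 0) :=
        fun j => by split_ifs <;> ring
      have e2 : ∀ j, (if j = 0 then (1:ℝ) else 0) * η j ω = (if j = 0 then η j ω else 0) :=
        fun j => by split_ifs <;> ring
      rw [Finset.sum_congr rfl (fun j _ => e1 j), Finset.sum_congr rfl (fun j _ => e2 j),
        sum_range_ite_f n hn, sum_range_ite_f n hn, hθnoisy, hθ]
      ring
    have idY : ∀ ω, θnoisy 0 ω - (1/(n:ℝ)) * ∑ j ∈ Finset.range n, θnoisy j ω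
        = ∑ t ∈ Sfin n, cY t * F t ω := by
      intro ω
      rw [sumS]
      simp only [hcY, hFdef, Sum.elim_inl, Sum.elim_inr, Option.elim_none, Option.elim_some]
      have e1 : ∀ j, κ * ((if j = 0 then (1:ℝ) else 0) - 1/(n:ℝ)) * ε j ω
          = (if j = 0 then κ * ε j ω else 0) - κ * (1/(n:ℝ)) * ε j ω :=
        fun j => by split_ifs <;> ring
      have e2 : ∀ j, ((if j = 0 then (1:ℝ) else 0) - 1/(n:ℝ)) * η j ω
          = (if j = 0 then η j ω else 0) - (1/(n:ℝ)) * η j ω :=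
        fun j => by split_ifs <;> ring
      rw [Finset.sum_congr rfl (fun j _ => e1 j), Finset.sum_congr rfl (fun j _ => e2 j),
        Finset.sum_sub_distrib, Finset.sum_sub_distrib, sum_range_ite_f n hn,
        sum_range_ite_f n hn, ← Finset.mul_sum, ← Finset.mul_sum]
      simp only [hθnoisy, hθ, Finset.sum_add_distrib, Finset.sum_const, Finset.card_range,
        nsmul_eq_mul, ← Finset.mul_sum]
      field_simp
      ring
    have hXmem : MemLp (fun ω => ∑ t ∈ Sfin n, cX t * F t ω) 2 P :=
      by
        have h := memLp_finset_sum' (Sfin n) (fun t (_ : t ∈ Sfin n) => (hmemF t).const_mul (cX t))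
        rwa [show (∑ t ∈ Sfin n, fun ω => cX t * F t ω)
          = (fun ω => ∑ t ∈ Sfin n, cX t * F t ω) from funext fun ω => by
            simp [Finset.sum_apply]] at h
    have hYmem : MemLp (fun ω => ∑ t ∈ Sfin n, cY t * F t ω) 2 P :=
      by
        have h := memLp_finset_sum' (Sfin n) (fun t (_ : t ∈ Sfin n) => (hmemF t).const_mul (cY t))
        rwa [show (∑ t ∈ Sfin n, fun ω => cY t * F t ω)
          = (fun ω => ∑ t ∈ Sfin n, cY t * F t ω) from funext fun ω => by
            simp [Finset.sum_apply]] at h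
    rw [hA n hn 0 (by omega)]
    have hfun : (fun ω => -α * (θnoisy 0 ω - s) ^ 2 -
        (1 - α) * (θnoisy 0 ω - (1 / (n : ℝ)) * ∑ j ∈ Finset.range n, θnoisy j ω) ^ 2)
        = fun ω => -α * (∑ t ∈ Sfin n, cX t * F t ω) ^ 2
            - (1 - α) * (∑ t ∈ Sfin n, cY t * F t ω) ^ 2 := by
      funext ω; rw [← idX ω, ← idY ω]
    rw [hfun, integral_sub ((hXmem.integrable_sq).const_mul (-α))
        ((hYmem.integrable_sq).const_mul (1-α)),
      MeasureTheory.integral_const_mul, MeasureTheory.integral_const_mul,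
      sq_sum_integral hindep hmemF hmeanF cX (Sfin n),
      sq_sum_integral hindep hmemF hmeanF cY (Sfin n), sumS, sumS]
    simp only [hcX, hcY, hFdef, Sum.elim_inl, Sum.elim_inr, Option.elim_none, Option.elim_some,
      hyvar, hεvar, hηvar]
    have e1 : ∀ j : ℕ, (if j = 0 then κ else 0)^2 * σx2 = (if j = 0 then κ^2*σx2 else 0) :=
      fun j => by split_ifs <;> ring
    have e2 : ∀ j : ℕ, (if j = 0 then (1:ℝ) else 0)^2 * ν = (if j = 0 then ν else 0) :=
      fun j => by split_ifs <;> ring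
    have f1 : ∀ j : ℕ, (κ * ((if j = 0 then (1:ℝ) else 0) - 1/(n:ℝ)))^2 * σx2
        = (κ^2*σx2) * ((if j = 0 then (1:ℝ) else 0) - 1/(n:ℝ))^2 := fun j => by ring
    have f2 : ∀ j : ℕ, ((if j = 0 then (1:ℝ) else 0) - 1/(n:ℝ))^2 * ν
        = ν * ((if j = 0 then (1:ℝ) else 0) - 1/(n:ℝ))^2 := fun j => by ring
    rw [Finset.sum_congr rfl (fun j _ => e1 j), Finset.sum_congr rfl (fun j _ => e2 j),
      Finset.sum_congr rfl (fun j _ => f1 j), Finset.sum_congr rfl (fun j _ => f2 j),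
      sum_range_ite_f n hn, sum_range_ite_f n hn, ← Finset.mul_sum, ← Finset.mul_sum,
      qlem n hn]
    ring
  have hBval : ∀ n : ℕ, 1 ≤ n →
      B n = -α * (κ^2*σx2 + (1-κ)^2*σy2) - (1-α) * (κ^2*σx2 * (1 - 1/(n:ℝ))) := by
    intro n hn
    have hm : (n:ℝ) ≠ 0 := Nat.cast_ne_zero.2 (by omega)
    set cX : Option ℕ ⊕ ℕ → ℝ := Sum.elim
        (fun o => o.elim (1-κ) (fun j => if j = 0 then κ else 0))
        (fun _ => (0:ℝ)) with hcX
    set cY : Option ℕ ⊕ ℕ → ℝ := Sum.elim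
        (fun o => o.elim 0 (fun j => κ * ((if j = 0 then (1:ℝ) else 0) - 1/(n:ℝ))))
        (fun _ => (0:ℝ)) with hcY
    have idX : ∀ ω, θ 0 ω - s = ∑ t ∈ Sfin n, cX t * F t ω := by
      intro ω
      rw [sumS]
      simp only [hcX, hFdef, Sum.elim_inl, Sum.elim_inr, Option.elim_none, Option.elim_some,
        zero_mul, Finset.sum_const_zero]
      have e1 : ∀ j, (if j = 0 then κ else 0) * ε j ω = (if j = 0 then κ * ε j ω else 0) :=
        fun j => by split_ifs <;> ring
      rw [Finset.sum_congr rfl (fun j _ => e1 j), sum_range_ite_f n hn, hθ]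
      ring
    have idY : ∀ ω, θ 0 ω - (1/(n:ℝ)) * ∑ j ∈ Finset.range n, θ j ω
        = ∑ t ∈ Sfin n, cY t * F t ω := by
      intro ω
      rw [sumS]
      simp only [hcY, hFdef, Sum.elim_inl, Sum.elim_inr, Option.elim_none, Option.elim_some,
        zero_mul, Finset.sum_const_zero]
      have e1 : ∀ j, κ * ((if j = 0 then (1:ℝ) else 0) - 1/(n:ℝ)) * ε j ω
          = (if j = 0 then κ * ε j ω else 0) - κ * (1/(n:ℝ)) * ε j ω :=
        fun j => by split_ifs <;> ring
      rw [Finset.sum_congr rfl (fun j _ => e1 j), Finset.sum_sub_distrib,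
        sum_range_ite_f n hn, ← Finset.mul_sum]
      simp only [hθ, Finset.sum_add_distrib, Finset.sum_const, Finset.card_range,
        nsmul_eq_mul, ← Finset.mul_sum]
      field_simp
      ring
    have hXmem : MemLp (fun ω => ∑ t ∈ Sfin n, cX t * F t ω) 2 P :=
      by
        have h := memLp_finset_sum' (Sfin n) (fun t (_ : t ∈ Sfin n) => (hmemF t).const_mul (cX t))
        rwa [show (∑ t ∈ Sfin n, fun ω => cX t * F t ω)
          = (fun ω => ∑ t ∈ Sfin n, cX t * F t ω) from funext fun ω => by
            simp [Finset.sum_apply]] at h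
    have hYmem : MemLp (fun ω => ∑ t ∈ Sfin n, cY t * F t ω) 2 P :=
      by
        have h := memLp_finset_sum' (Sfin n) (fun t (_ : t ∈ Sfin n) => (hmemF t).const_mul (cY t))
        rwa [show (∑ t ∈ Sfin n, fun ω => cY t * F t ω)
          = (fun ω => ∑ t ∈ Sfin n, cY t * F t ω) from funext fun ω => by
            simp [Finset.sum_apply]] at h
    rw [hB n hn 0 (by omega)]
    have hfun : (fun ω => -α * (θ 0 ω - s) ^ 2 -
        (1 - α) * (θ 0 ω - (1 / (n : ℝ)) * ∑ j ∈ Finset.range n, θ j ω) ^ 2)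
        = fun ω => -α * (∑ t ∈ Sfin n, cX t * F t ω) ^ 2
            - (1 - α) * (∑ t ∈ Sfin n, cY t * F t ω) ^ 2 := by
      funext ω; rw [← idX ω, ← idY ω]
    rw [hfun, integral_sub ((hXmem.integrable_sq).const_mul (-α))
        ((hYmem.integrable_sq).const_mul (1-α)),
      MeasureTheory.integral_const_mul, MeasureTheory.integral_const_mul,
      sq_sum_integral hindep hmemF hmeanF cX (Sfin n),
      sq_sum_integral hindep hmemF hmeanF cY (Sfin n), sumS, sumS]
    simp only [hcX, hcY, hFdef, Sum.elim_inl, Sum.elim_inr, Option.elim_none, Option.elim_some,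
      hyvar, hεvar, hηvar, ne_eq, OfNat.ofNat_ne_zero, not_false_eq_true, zero_pow, zero_mul,
      Finset.sum_const_zero]
    have e1 : ∀ j : ℕ, (if j = 0 then κ else 0)^2 * σx2 = (if j = 0 then κ^2*σx2 else 0) :=
      fun j => by split_ifs <;> ring
    have f1 : ∀ j : ℕ, (κ * ((if j = 0 then (1:ℝ) else 0) - 1/(n:ℝ)))^2 * σx2
        = (κ^2*σx2) * ((if j = 0 then (1:ℝ) else 0) - 1/(n:ℝ))^2 := fun j => by ring
    rw [Finset.sum_congr rfl (fun j _ => e1 j), Finset.sum_congr rfl (fun j _ => f1 j),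
      sum_range_ite_f n hn, ← Finset.mul_sum, qlem n hn]
    ring
  -- limits
  have hone : Filter.Tendsto (fun n : ℕ => 1 - 1/(n:ℝ)) Filter.atTop (nhds 1) := by
    have : Filter.Tendsto (fun n : ℕ => 1/(n:ℝ)) Filter.atTop (nhds 0) :=
      tendsto_one_div_atTop_nhds_zero_nat
    simpa using (tendsto_const_nhds.sub this)
  have hAlim : Filter.Tendsto A Filter.atTop (nhds (-(D + ν))) := by
    refine Filter.Tendsto.congr' ?_ ?_ (f₁ := fun n : ℕ =>
      -α * (κ^2*σx2 + (1-κ)^2*σy2 + ν) - (1-α) * ((κ^2*σx2 + ν) * (1 - 1/(n:ℝ))))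
    · filter_upwards [Filter.eventually_ge_atTop 1] with n hn
      exact (hAval n hn).symm
    · have : Filter.Tendsto (fun n : ℕ =>
          -α * (κ^2*σx2 + (1-κ)^2*σy2 + ν) - (1-α) * ((κ^2*σx2 + ν) * (1 - 1/(n:ℝ))))
          Filter.atTop (nhds (-α * (κ^2*σx2 + (1-κ)^2*σy2 + ν) - (1-α) * ((κ^2*σx2 + ν) * 1))) :=
        tendsto_const_nhds.sub (tendsto_const_nhds.mul (tendsto_const_nhds.mul hone))
      convert this using 2
      rw [hDdef]; ring
  have hBlim : Filter.Tendsto B Filter.atTop (nhds (-D)) := by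
    refine Filter.Tendsto.congr' ?_ ?_ (f₁ := fun n : ℕ =>
      -α * (κ^2*σx2 + (1-κ)^2*σy2) - (1-α) * (κ^2*σx2 * (1 - 1/(n:ℝ))))
    · filter_upwards [Filter.eventually_ge_atTop 1] with n hn
      exact (hBval n hn).symm
    · have : Filter.Tendsto (fun n : ℕ =>
          -α * (κ^2*σx2 + (1-κ)^2*σy2) - (1-α) * (κ^2*σx2 * (1 - 1/(n:ℝ))))
          Filter.atTop (nhds (-α * (κ^2*σx2 + (1-κ)^2*σy2) - (1-α) * (κ^2*σx2 * 1))) :=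
        tendsto_const_nhds.sub (tendsto_const_nhds.mul (tendsto_const_nhds.mul hone))
      convert this using 2
      rw [hDdef]; ring
  have := hAlim.div hBlim (by simpa using hD')
  convert this using 2
  · rfl
  rw [neg_div_neg_eq]
  field_simp
end

section
/- In the noisy Keynesian beauty contest signal model with σx², σy² > 0: E[ ( (1/n)·Σⱼ (θⱼ + ηⱼ) − s )² ] / E[ ( (1/n)·Σⱼ θⱼ − s )² ] = 1 + ν/(κ²σx² + n(1−κ)²σy²). -/
open MeasureTheory ProbabilityTheory

lemma aux14 {Ω : Type*} [MeasurableSpace Ω] (P : Measure Ω) [IsProbabilityMeasure P]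
    {ι : Type*} [Fintype ι] (X : ι → Ω → ℝ) (c : ι → ℝ)
    (hmem : ∀ i, MemLp (X i) 2 P) (hmean : ∀ i, ∫ ω, X i ω ∂P = 0)
    (hindep : iIndepFun X P) :
    ∫ ω, (∑ i, c i * X i ω) ^ 2 ∂P = ∑ i, (c i) ^ 2 * ∫ ω, (X i ω) ^ 2 ∂P := by
  set Y : ι → Ω → ℝ := fun i ω => c i * X i ω with hY
  have hmemY : ∀ i, MemLp (Y i) 2 P := fun i => (hmem i).const_mul (c i)
  have hmeanY : ∀ i, ∫ ω, Y i ω ∂P = 0 := by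
    intro i; simp [hY, integral_const_mul, hmean i]
  have hpair : Set.Pairwise ↑(Finset.univ : Finset ι)
      (fun i j => IndepFun (Y i) (Y j) P) := by
    intro i _ j _ hij
    exact (hindep.indepFun hij).comp (measurable_const_mul (c i))
      (measurable_const_mul (c j))
  have hsum : MemLp (∑ i, Y i) 2 P := memLp_finset_sum' _ (fun i _ => hmemY i)
  have hV := IndepFun.variance_sum (μ := P) (fun i _ => hmemY i) hpair
  have hVd := variance_eq_sub (μ := P) hsum
  have hint : ∫ ω, (∑ i, Y i) ω ∂P = 0 := by
    simp only [Finset.sum_apply]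
    rw [integral_finset_sum _ (fun i _ => (hmemY i).integrable one_le_two)]
    simp [hmeanY]
  have key : ∫ ω, ((∑ i, Y i) ω) ^ 2 ∂P = ∑ i, variance (Y i) P := by
    rw [← hV, hVd, hint]
    simp [Pi.pow_apply]
  calc ∫ ω, (∑ i, c i * X i ω) ^ 2 ∂P = ∫ ω, ((∑ i, Y i) ω) ^ 2 ∂P := by
        congr 1; ext ω; simp [hY]
    _ = ∑ i, variance (Y i) P := key
    _ = ∑ i, (c i) ^ 2 * ∫ ω, (X i ω) ^ 2 ∂P := by
        refine Finset.sum_congr rfl fun i _ => ?_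
        have : variance (Y i) P = variance (fun ω => c i * X i ω) P := rfl
        rw [this, variance_const_mul, variance_eq_sub (hmem i), hmean i]
        simp [Pi.pow_apply]

/-- The aggregator's price of privacy: the ratio of the expected squared error of
the sample average of noisy actions about `s` to that of the noiseless actions
equals `1 + ν/(κ²σx² + n(1-κ)²σy²)`. -/
theorem stmt14 {Ω : Type*} [MeasurableSpace Ω] (P : Measure Ω) [IsProbabilityMeasure P]
    (n : ℕ) (hn : 1 ≤ n) (s κ α : ℝ) (hα0 : 0 ≤ α) (hα1 : α ≤ 1)
    (σx2 σy2 ν : ℝ) (hx : 0 < σx2) (hy : 0 < σy2) (hν : 0 ≤ ν)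
    (ε : Fin n → Ω → ℝ) (εy : Ω → ℝ) (η : Fin n → Ω → ℝ)
    (hmem : ∀ j, MemLp (ε j) 2 P) (hmemy : MemLp εy 2 P) (hmemη : ∀ j, MemLp (η j) 2 P)
    (hεmean : ∀ j, ∫ ω, ε j ω ∂P = 0) (hεvar : ∀ j, ∫ ω, (ε j ω) ^ 2 ∂P = σx2)
    (hymean : ∫ ω, εy ω ∂P = 0) (hyvar : ∫ ω, (εy ω) ^ 2 ∂P = σy2)
    (hηmean : ∀ j, ∫ ω, η j ω ∂P = 0) (hηvar : ∀ j, ∫ ω, (η j ω) ^ 2 ∂P = ν)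
    (hindep : iIndepFun
      (Sum.elim (fun o : Option (Fin n) => o.elim εy ε) η) P)
    (θ : Fin n → Ω → ℝ)
    (hθ : ∀ j ω, θ j ω = s + κ * ε j ω + (1 - κ) * εy ω) :
    (∫ ω, ((1 / (n : ℝ)) * ∑ j, (θ j ω + η j ω) - s) ^ 2 ∂P) /
      (∫ ω, ((1 / (n : ℝ)) * ∑ j, θ j ω - s) ^ 2 ∂P)
      = 1 + ν / (κ ^ 2 * σx2 + (n : ℝ) * (1 - κ) ^ 2 * σy2) := by
  have hn0 : (0:ℝ) < n := by exact_mod_cast hn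
  have hnne : (n:ℝ) ≠ 0 := hn0.ne'
  set X : Option (Fin n) ⊕ Fin n → Ω → ℝ :=
    Sum.elim (fun o : Option (Fin n) => o.elim εy ε) η with hX
  have hmemX : ∀ i, MemLp (X i) 2 P := by
    rintro ((_|j)|j)
    · exact hmemy
    · exact hmem j
    · exact hmemη j
  have hmeanX : ∀ i, ∫ ω, X i ω ∂P = 0 := by
    rintro ((_|j)|j)
    · exact hymean
    · exact hεmean j
    · exact hηmean j
  set c1 : Option (Fin n) ⊕ Fin n → ℝ :=
    Sum.elim (fun o => o.elim (1-κ) (fun _ => κ/n)) (fun _ => 1/n) with hc1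
  set c0 : Option (Fin n) ⊕ Fin n → ℝ :=
    Sum.elim (fun o => o.elim (1-κ) (fun _ => κ/n)) (fun _ => 0) with hc0
  have Hnum := aux14 P X c1 hmemX hmeanX hindep
  have Hden := aux14 P X c0 hmemX hmeanX hindep
  have e1 : ∀ ω, (1 / (n : ℝ)) * ∑ j, (θ j ω + η j ω) - s = ∑ i, c1 i * X i ω := by
    intro ω
    simp only [hθ, hc1, hX, Fintype.sum_sum_type, Fintype.sum_option, Sum.elim_inl,
      Sum.elim_inr, Option.elim, Finset.sum_add_distrib, Finset.sum_const,
      Finset.card_univ, Fintype.card_fin, nsmul_eq_mul, ← Finset.mul_sum]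
    field_simp
    ring
  have e0 : ∀ ω, (1 / (n : ℝ)) * ∑ j, θ j ω - s = ∑ i, c0 i * X i ω := by
    intro ω
    simp only [hθ, hc0, hX, Fintype.sum_sum_type, Fintype.sum_option, Sum.elim_inl,
      Sum.elim_inr, Option.elim, Finset.sum_add_distrib, Finset.sum_const,
      Finset.card_univ, Fintype.card_fin, nsmul_eq_mul, ← Finset.mul_sum]
    field_simp
    ring
  have Enum : ∫ ω, ((1 / (n : ℝ)) * ∑ j, (θ j ω + η j ω) - s) ^ 2 ∂P
      = (1-κ)^2 * σy2 + (n:ℝ) * ((κ/n)^2 * σx2) + (n:ℝ) * ((1/n)^2 * ν) := by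
    rw [show (∫ ω, ((1 / (n : ℝ)) * ∑ j, (θ j ω + η j ω) - s) ^ 2 ∂P)
        = ∫ ω, (∑ i, c1 i * X i ω) ^ 2 ∂P by congr 1; ext ω; rw [e1 ω]]
    rw [Hnum]
    simp only [hc1, hX, Fintype.sum_sum_type, Fintype.sum_option, Sum.elim_inl,
      Sum.elim_inr, Option.elim, hyvar, hεvar, hηvar, Finset.sum_const,
      Finset.card_univ, Fintype.card_fin, nsmul_eq_mul]
  have Eden : ∫ ω, ((1 / (n : ℝ)) * ∑ j, θ j ω - s) ^ 2 ∂P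
      = (1-κ)^2 * σy2 + (n:ℝ) * ((κ/n)^2 * σx2) := by
    rw [show (∫ ω, ((1 / (n : ℝ)) * ∑ j, θ j ω - s) ^ 2 ∂P)
        = ∫ ω, (∑ i, c0 i * X i ω) ^ 2 ∂P by congr 1; ext ω; rw [e0 ω]]
    rw [Hden]
    simp only [hc0, hX, Fintype.sum_sum_type, Fintype.sum_option, Sum.elim_inl,
      Sum.elim_inr, Option.elim, hyvar, hεvar, hηvar, Finset.sum_const,
      Finset.card_univ, Fintype.card_fin, nsmul_eq_mul]
    ring
  have hD : 0 < κ ^ 2 * σx2 + (n : ℝ) * (1 - κ) ^ 2 * σy2 := by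
    rcases eq_or_ne κ 0 with h|h
    · subst h
      have := mul_pos hn0 hy
      nlinarith
    · have h2 : 0 < κ ^ 2 := by positivity
      nlinarith [mul_pos h2 hx, mul_nonneg (mul_nonneg hn0.le (sq_nonneg (1-κ))) hy.le]
  rw [Enum, Eden]
  rw [div_eq_iff]
  · have hA : (1-κ)^2 * σy2 + (n:ℝ) * ((κ/n)^2 * σx2) = (κ ^ 2 * σx2 + (n : ℝ) * (1 - κ) ^ 2 * σy2) / n := by
      field_simp; ring
    rw [hA]
    field_simp [hD.ne']
  · intro h
    have : (1-κ)^2 * σy2 + (n:ℝ) * ((κ/n)^2 * σx2) = (κ ^ 2 * σx2 + (n : ℝ) * (1 - κ) ^ 2 * σy2) / n := by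
      field_simp; ring
    rw [this] at h
    exact absurd h (ne_of_gt (div_pos hD hn0))
end
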